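/- Fix μ > 0 and ξ > 0, and define G̃(t,r) = μ(T−t)·M(T−t,r) + ξ·γ(t,r) on [0,T) × ℝ. Then: (i) γ(t,r) ≥ 0 for all (t,r) ∈ [0,T) × ℝ; (ii) for every t ∈ [0,T), lim_{r→∞} G̃(t,r) = 0 and lim_{r→−∞} G̃(t,r) = ∞; (iii) for every r ∈ ℝ, lim_{t→T⁻} G̃(t,r) = 0. -/

import Mathlib

/-! On `z ≥ α(s)` the exponent of `M(T - s, z)`, which is `(1 - e^{-a(T-s)})/a · (α(s) - z)`,
is nonpositive, so `0 ≤ 1 - M(T - u - t, z) ≤ 1` on the domain of the inner integral of `γ`.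
As `φ(·, u, r)` is a Gaussian probability density, the inner integral lies in `[0, M(u, r)]`,
hence `0 ≤ γ(t, r) ≤ ∫₀^{T-t} M(u, r) du`. Finally `M(u, r) = M(u, 0) · e^{-(1 - e^{-au}) r / a}`
decreases to `0` as `r → ∞` and blows up as `r → -∞`; dominated convergence (as `r → ∞`) and
continuity of the primitive in its upper limit (as `t → T`) squeeze `γ` to `0`. -/

open Real Filter MeasureTheory intervalIntegral

noncomputable def M (a δ b u r : ℝ) : ℝ :=
  Real.exp (-(b - δ^2/(2*a^2))*u + ((b - δ^2/(2*a^2)) - r)/a * (1 - Real.exp (-(a*u)))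
    - δ^2/(4*a^3) * (1 - Real.exp (-(a*u)))^2)

/-- The separating curve `α(t)`. -/
noncomputable def alphaCurve (a δ b T t : ℝ) : ℝ :=
  (b - δ^2/(2*a^2)) * (1 - a*(T - t)/(1 - Real.exp (-(a*(T - t)))))
    - δ^2/(4*a^2) * (1 - Real.exp (-(a*(T - t))))

/-- The Gaussian kernel `φ(z,u,r)`. -/
noncomputable def phiKer (a δ b z u r : ℝ) : ℝ :=
  (Real.sqrt (2*Real.pi*(δ^2/(2*a))*(1 - Real.exp (-(2*a*u)))))⁻¹ *
    Real.exp (-(z - r*Real.exp (-(a*u)) - b*(1 - Real.exp (-(a*u)))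
      + δ^2/(2*a^2)*(1 - Real.exp (-(a*u)))^2)^2
      / (2*(δ^2/(2*a))*(1 - Real.exp (-(2*a*u)))))

/-- The function `γ(t,r) = ∫_0^{T−t} ∫_{α(u+t)}^∞ M(u,r)(1−M(T−u−t,z))φ(z,u,r) dz du`. -/
noncomputable def gammaFun (a δ b T t r : ℝ) : ℝ :=
  ∫ u in (0:ℝ)..(T - t), ∫ z in Set.Ioi (alphaCurve a δ b T (u + t)),
    M a δ b u r * (1 - M a δ b (T - u - t) z) * phiKer a δ b z u r

/-- The function `G̃(t,r) = μ(T−t)·M(T−t,r) + ξ·γ(t,r)`. -/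
noncomputable def Gtilde (a δ b T μ ξ t r : ℝ) : ℝ :=
  μ*(T - t)*M a δ b (T - t) r + ξ * gammaFun a δ b T t r

open ProbabilityTheory Set Topology

section SetIntegral

variable {α : Type*} [MeasurableSpace α] {μ : Measure α}

lemma norm_setIntegral_mul_le_integral {f p : α → ℝ} {s : Set α} (hs : MeasurableSet s)
    (hf : ∀ x ∈ s, ‖f x‖ ≤ 1) (hp : Integrable p μ) (hp0 : 0 ≤ p) :
    ‖∫ x in s, f x * p x ∂μ‖ ≤ ∫ x, p x ∂μ :=
  calc ‖∫ x in s, f x * p x ∂μ‖ ≤ ∫ x in s, p x ∂μ := by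
        refine norm_integral_le_of_norm_le hp.integrableOn ((ae_restrict_iff' hs).2 ?_)
        refine ae_of_all _ fun x hx => ?_
        rw [norm_mul, Real.norm_of_nonneg (hp0 x)]
        exact mul_le_of_le_one_left (hp0 x) (hf x hx)
    _ ≤ ∫ x, p x ∂μ := setIntegral_le_integral hp (ae_of_all _ hp0)

end SetIntegral

section Kernel

variable {a δ b : ℝ}

lemma one_sub_exp_neg_pos {x : ℝ} (hx : 0 < x) : 0 < 1 - exp (-x) := by
  rw [sub_pos, exp_lt_one_iff]
  linarith

lemma one_sub_exp_neg_nonneg {x : ℝ} (hx : 0 ≤ x) : 0 ≤ 1 - exp (-x) := by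
  rw [sub_nonneg, exp_le_one_iff]
  linarith

lemma M_pos (u r : ℝ) : 0 < M a δ b u r := exp_pos _

lemma continuous_M (r : ℝ) : Continuous (M a δ b · r) := by
  unfold M
  fun_prop

lemma M_eq_mul_exp (u r : ℝ) :
    M a δ b u r = M a δ b u 0 * exp (-((1 - exp (-(a * u))) / a * r)) := by
  simp only [M, ← exp_add]
  ring_nf

lemma M_antitone (ha : 0 < a) {u : ℝ} (hu : 0 ≤ u) : Antitone (M a δ b u) := by
  have hk : 0 ≤ (1 - exp (-(a * u))) / a :=
    div_nonneg (one_sub_exp_neg_nonneg (mul_nonneg ha.le hu)) ha.le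
  intro r r' hr
  rw [M_eq_mul_exp u r, M_eq_mul_exp u r']
  gcongr
  exact (M_pos u 0).le

lemma tendsto_M_atTop (ha : 0 < a) {u : ℝ} (hu : 0 < u) :
    Tendsto (M a δ b u) atTop (𝓝 0) := by
  have hk : 0 < (1 - exp (-(a * u))) / a := div_pos (one_sub_exp_neg_pos (mul_pos ha hu)) ha
  have h := (tendsto_exp_neg_atTop_nhds_zero.comp
    (tendsto_id.const_mul_atTop hk)).const_mul (M a δ b u 0)
  rw [mul_zero] at h
  exact h.congr fun r => (M_eq_mul_exp u r).symm

lemma tendsto_M_atBot (ha : 0 < a) {u : ℝ} (hu : 0 < u) :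
    Tendsto (M a δ b u) atBot atTop := by
  have hk : 0 < (1 - exp (-(a * u))) / a := div_pos (one_sub_exp_neg_pos (mul_pos ha hu)) ha
  have h := (tendsto_exp_atTop.comp (tendsto_neg_atBot_atTop.comp
    (tendsto_id.const_mul_atBot hk))).const_mul_atTop (M_pos (a := a) (δ := δ) (b := b) u 0)
  exact h.congr fun r => (M_eq_mul_exp u r).symm

lemma M_sub_eq_exp_alphaCurve (ha : a ≠ 0) (T s z : ℝ) :
    M a δ b (T - s) z = exp ((1 - exp (-(a * (T - s)))) / a * (alphaCurve a δ b T s - z)) := by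
  rw [M, alphaCurve]
  by_cases hc : 1 - exp (-(a * (T - s))) = 0
  · have hs : T - s = 0 := by
      simpa [ha, sub_eq_zero, eq_comm (a := (1 : ℝ))] using hc
    simp [hs]
  · congr 1
    field_simp
    ring

lemma M_sub_le_one (ha : 0 < a) {T s z : ℝ} (hs : s ≤ T) (hz : alphaCurve a δ b T s ≤ z) :
    M a δ b (T - s) z ≤ 1 := by
  rw [M_sub_eq_exp_alphaCurve ha.ne', exp_le_one_iff]
  exact mul_nonpos_of_nonneg_of_nonpos
    (div_nonneg (one_sub_exp_neg_nonneg (mul_nonneg ha.le (sub_nonneg.2 hs))) ha.le)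
    (sub_nonpos.2 hz)

lemma phiKer_nonneg (z u r : ℝ) : 0 ≤ phiKer a δ b z u r := by
  unfold phiKer
  positivity

lemma phiKer_eq_gaussianPDFReal (ha : 0 < a) (hδ : 0 < δ) {u : ℝ} (hu : 0 < u) (r : ℝ) :
    ∃ v : NNReal, v ≠ 0 ∧ (phiKer a δ b · u r) = gaussianPDFReal
      (r * exp (-(a * u)) + b * (1 - exp (-(a * u))) - δ^2/(2*a^2) * (1 - exp (-(a * u)))^2) v := by
  set v := δ^2/(2*a) * (1 - exp (-(2*a*u)))
  have hv : 0 < v := mul_pos (by positivity) (one_sub_exp_neg_pos (by positivity))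
  refine ⟨v.toNNReal, by simpa using hv, ?_⟩
  ext z
  rw [phiKer, gaussianPDFReal, Real.coe_toNNReal _ hv.le]
  congr 1
  · congr 2
    ring
  · congr 1
    ring

lemma integrable_phiKer (ha : 0 < a) (hδ : 0 < δ) {u : ℝ} (hu : 0 < u) (r : ℝ) :
    Integrable (phiKer a δ b · u r) := by
  obtain ⟨v, -, hφ⟩ := phiKer_eq_gaussianPDFReal (b := b) ha hδ hu r
  rw [hφ]
  exact integrable_gaussianPDFReal _ _

lemma integral_phiKer (ha : 0 < a) (hδ : 0 < δ) {u : ℝ} (hu : 0 < u) (r : ℝ) :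
    ∫ z, phiKer a δ b z u r = 1 := by
  obtain ⟨v, hv, hφ⟩ := phiKer_eq_gaussianPDFReal (b := b) ha hδ hu r
  rw [hφ]
  exact integral_gaussianPDFReal_eq_one _ hv

end Kernel

section Gamma

variable {a δ b T : ℝ}

noncomputable def gammaInner (a δ b T t u r : ℝ) : ℝ :=
  ∫ z in Ioi (alphaCurve a δ b T (u + t)),
    M a δ b u r * (1 - M a δ b (T - u - t) z) * phiKer a δ b z u r

lemma gammaFun_eq_integral_gammaInner (t r : ℝ) :
    gammaFun a δ b T t r = ∫ u in (0 : ℝ)..(T - t), gammaInner a δ b T t u r := rfl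

lemma one_sub_M_mem_Icc (ha : 0 < a) {t u z : ℝ} (hut : u + t ≤ T)
    (hz : alphaCurve a δ b T (u + t) ≤ z) : 1 - M a δ b (T - u - t) z ∈ Icc (0 : ℝ) 1 :=
  ⟨sub_nonneg.2 (sub_sub T u t ▸ M_sub_le_one ha hut hz), sub_le_self _ (M_pos _ _).le⟩

lemma gammaInner_nonneg (ha : 0 < a) {t u : ℝ} (hut : u + t ≤ T) (r : ℝ) :
    0 ≤ gammaInner a δ b T t u r :=
  setIntegral_nonneg measurableSet_Ioi fun z hz =>
    mul_nonneg (mul_nonneg (M_pos u r).le (one_sub_M_mem_Icc ha hut hz.le).1) (phiKer_nonneg z u r)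

lemma norm_gammaInner_le (ha : 0 < a) (hδ : 0 < δ) {t u : ℝ} (hu : 0 < u) (hut : u + t ≤ T)
    (r : ℝ) : ‖gammaInner a δ b T t u r‖ ≤ M a δ b u r := by
  have hM : ∀ z ∈ Ioi (alphaCurve a δ b T (u + t)), ‖1 - M a δ b (T - u - t) z‖ ≤ 1 :=
    fun z hz => by
      obtain ⟨h0, h1⟩ := one_sub_M_mem_Icc ha hut (le_of_lt hz)
      rwa [Real.norm_of_nonneg h0]
  have hint : ‖∫ z in Ioi (alphaCurve a δ b T (u + t)),
      (1 - M a δ b (T - u - t) z) * phiKer a δ b z u r‖ ≤ 1 := by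
    simpa only [integral_phiKer ha hδ hu r] using norm_setIntegral_mul_le_integral
      measurableSet_Ioi hM (integrable_phiKer ha hδ hu r) (phiKer_nonneg · u r)
  simp only [gammaInner, mul_assoc, MeasureTheory.integral_const_mul, norm_mul,
    Real.norm_of_nonneg (M_pos u r).le]
  exact mul_le_of_le_one_right (M_pos u r).le hint

lemma gammaFun_nonneg (ha : 0 < a) {t : ℝ} (ht : t ≤ T) (r : ℝ) :
    0 ≤ gammaFun a δ b T t r := by
  rw [gammaFun_eq_integral_gammaInner]
  exact intervalIntegral.integral_nonneg (sub_nonneg.2 ht) fun _ hu =>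
    gammaInner_nonneg ha (by linarith [hu.2]) r

lemma norm_gammaFun_le (ha : 0 < a) (hδ : 0 < δ) {t : ℝ} (ht : t ≤ T) (r : ℝ) :
    ‖gammaFun a δ b T t r‖ ≤ ∫ u in (0 : ℝ)..(T - t), M a δ b u r := by
  rw [gammaFun_eq_integral_gammaInner]
  exact intervalIntegral.norm_integral_le_of_norm_le (sub_nonneg.2 ht)
    (ae_of_all _ fun _ hu => norm_gammaInner_le ha hδ hu.1 (by linarith [hu.2]) r)
    ((continuous_M r).intervalIntegrable _ _)

lemma tendsto_integral_M_atTop (ha : 0 < a) {s : ℝ} (hs : 0 ≤ s) :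
    Tendsto (fun r => ∫ u in (0 : ℝ)..s, M a δ b u r) atTop (𝓝 0) := by
  have h := intervalIntegral.tendsto_integral_filter_of_dominated_convergence (l := atTop)
    (F := fun r u => M a δ b u r) (f := fun _ => 0) (μ := volume) (a := 0) (b := s)
    (M a δ b · 0) (Eventually.of_forall fun r => (continuous_M r).aestronglyMeasurable)
    ?_ ((continuous_M 0).intervalIntegrable _ _) ?_
  · simpa only [intervalIntegral.integral_zero] using h
  · filter_upwards [eventually_ge_atTop 0] with r hr
    refine ae_of_all _ fun u hu => ?_
    rw [uIoc_of_le hs] at hu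
    rw [Real.norm_of_nonneg (M_pos u r).le]
    exact M_antitone ha hu.1.le hr
  · refine ae_of_all _ fun u hu => ?_
    rw [uIoc_of_le hs] at hu
    exact tendsto_M_atTop ha hu.1

lemma tendsto_gammaFun_atTop (ha : 0 < a) (hδ : 0 < δ) {t : ℝ} (ht : t ≤ T) :
    Tendsto (gammaFun a δ b T t) atTop (𝓝 0) :=
  squeeze_zero_norm (norm_gammaFun_le ha hδ ht) (tendsto_integral_M_atTop ha (sub_nonneg.2 ht))

lemma tendsto_gammaFun_nhdsLT (ha : 0 < a) (hδ : 0 < δ) (r : ℝ) :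
    Tendsto (gammaFun a δ b T · r) (𝓝[<] T) (𝓝 0) := by
  have hint : Continuous fun t => ∫ u in (0 : ℝ)..(T - t), M a δ b u r :=
    (intervalIntegral.continuous_primitive (fun _ _ => (continuous_M r).intervalIntegrable _ _)
      0).comp (continuous_const.sub continuous_id)
  have hlim := (hint.tendsto T).mono_left (nhdsWithin_le_nhds (s := Iio T))
  rw [sub_self, intervalIntegral.integral_same] at hlim
  exact squeeze_zero_norm' (eventually_nhdsWithin_of_forall fun t ht =>
    norm_gammaFun_le ha hδ (le_of_lt ht) r) hlim

end Gamma

section Gtilde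

variable {a δ b T μ ξ : ℝ}

lemma tendsto_Gtilde_atTop (ha : 0 < a) (hδ : 0 < δ) {t : ℝ} (ht : t < T) :
    Tendsto (Gtilde a δ b T μ ξ t) atTop (𝓝 0) := by
  rw [show (0 : ℝ) = μ * (T - t) * 0 + ξ * 0 by ring]
  exact ((tendsto_M_atTop ha (sub_pos.2 ht)).const_mul _).add
    ((tendsto_gammaFun_atTop ha hδ ht.le).const_mul _)

lemma tendsto_Gtilde_atBot (ha : 0 < a) (hμ : 0 < μ) (hξ : 0 ≤ ξ) {t : ℝ} (ht : t < T) :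
    Tendsto (Gtilde a δ b T μ ξ t) atBot atTop :=
  tendsto_atTop_mono
    (fun r => le_add_of_nonneg_right (mul_nonneg hξ (gammaFun_nonneg ha ht.le r)))
    ((tendsto_M_atBot ha (sub_pos.2 ht)).const_mul_atTop (mul_pos hμ (sub_pos.2 ht)))

lemma tendsto_Gtilde_nhdsLT (ha : 0 < a) (hδ : 0 < δ) (r : ℝ) :
    Tendsto (Gtilde a δ b T μ ξ · r) (𝓝[<] T) (𝓝 0) := by
  have hcont : Continuous fun t => μ * (T - t) * M a δ b (T - t) r := by
    have := continuous_M (a := a) (δ := δ) (b := b) r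
    fun_prop
  have hfirst := (hcont.tendsto T).mono_left (nhdsWithin_le_nhds (s := Iio T))
  rw [sub_self, mul_zero, zero_mul] at hfirst
  rw [show (0 : ℝ) = 0 + ξ * 0 by ring]
  exact hfirst.add ((tendsto_gammaFun_nhdsLT ha hδ r).const_mul _)

end Gtilde

theorem Gtilde_boundary_general (a δ b T μ ξ : ℝ) (ha : 0 < a) (hδ : 0 < δ)
    (hμ : 0 < μ) (hξ : 0 < ξ) :
    (∀ t : ℝ, 0 ≤ t → t < T → ∀ r : ℝ, 0 ≤ gammaFun a δ b T t r) ∧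
    (∀ t : ℝ, 0 ≤ t → t < T →
      Tendsto (fun r => Gtilde a δ b T μ ξ t r) atTop (nhds 0) ∧
      Tendsto (fun r => Gtilde a δ b T μ ξ t r) atBot atTop) ∧
    (∀ r : ℝ, Tendsto (fun t => Gtilde a δ b T μ ξ t r)
      (nhdsWithin T (Set.Iio T)) (nhds 0)) :=
  ⟨fun _ _ ht r => gammaFun_nonneg ha ht.le r,
    fun _ _ ht => ⟨tendsto_Gtilde_atTop ha hδ ht, tendsto_Gtilde_atBot ha hμ hξ.le ht⟩,
    fun r => tendsto_Gtilde_nhdsLT ha hδ r⟩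

/-- (i) `γ(t,r) ≥ 0` on `[0,T) × ℝ`;
(ii) for every `t ∈ [0,T)`, `lim_{r→∞} G̃(t,r) = 0` and `lim_{r→−∞} G̃(t,r) = ∞`;
(iii) for every `r`, `lim_{t→T⁻} G̃(t,r) = 0`. -/
theorem Gtilde_boundary (a δ b T μ ξ : ℝ) (ha : 0 < a) (hδ : 0 < δ) (hT : 0 < T)
    (hμ : 0 < μ) (hξ : 0 < ξ) :
    (∀ t : ℝ, 0 ≤ t → t < T → ∀ r : ℝ, 0 ≤ gammaFun a δ b T t r) ∧
    (∀ t : ℝ, 0 ≤ t → t < T →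
      Tendsto (fun r => Gtilde a δ b T μ ξ t r) atTop (nhds 0) ∧
      Tendsto (fun r => Gtilde a δ b T μ ξ t r) atBot atTop) ∧
    (∀ r : ℝ, Tendsto (fun t => Gtilde a δ b T μ ξ t r)
      (nhdsWithin T (Set.Iio T)) (nhds 0)) :=
  Gtilde_boundary_general a δ b T μ ξ ha hδ hμ hξ
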